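/- Let G_1 be a finite group, let E be a finite set of ordered pairs of distinct primes such that whenever G_1 contains a Schmidt (p,q)-subgroup one has (p, q) ∈ E, and let V be a finite set of primes containing every prime dividing the order of G_1 and every prime occurring in a pair of E. Then there exists a finite group G_2 containing a subgroup isomorphic to G_1 such that the set of primes dividing the order of G_2 is exactly V and, for distinct primes p and q, G_2 contains a Schmidt (p,q)-subgroup if and only if (p, q) ∈ E. -/

import Mathlib

/-- A Schmidt group: a finite non-nilpotent group all of whose proper subgroups are nilpotent. -/
def IsSchmidtGroup (G : Type*) [Group G] : Prop :=
  Finite G ∧ ¬ Group.IsNilpotent G ∧ ∀ H : Subgroup G, H ≠ ⊤ → Group.IsNilpotent H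

/-- A Schmidt `(p, q)`-group: a Schmidt group whose order is divisible by no primes other than
`p` and `q` and whose Sylow `p`-subgroup is normal. -/
def IsSchmidtPQGroup (p q : ℕ) (G : Type*) [Group G] : Prop :=
  IsSchmidtGroup G ∧ (∀ r : ℕ, r.Prime → r ∣ Nat.card G → r = p ∨ r = q) ∧
    ∀ P : Sylow p G, (P : Subgroup G).Normal

/-- `G` contains a Schmidt `(p, q)`-subgroup. -/
def HasSchmidtPQSubgroup (p q : ℕ) (G : Type*) [Group G] : Prop :=
  ∃ H : Subgroup G, IsSchmidtPQGroup p q H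

/-!
Take `G₂ = G₁ × C × ∏_{(p,q) ∈ E} C_p ≀ C_q`, where `C` is cyclic of order `∏_{r ∈ V} r`.
A Schmidt subgroup of a direct product maps onto a Schmidt subgroup of some factor, since
otherwise it embeds in a product of nilpotent groups; the abelian factor `C` has none.
The wreath product `C_p ≀ C_q` is a non-nilpotent `{p, q}`-group whose base is a normal Sylow
`p`-subgroup, so a minimal non-nilpotent subgroup of it is a Schmidt `(p, q)`-subgroup.
Conversely every subgroup inherits a normal Sylow `p`-subgroup, and a Schmidt group cannot have
normal Sylow subgroups for both of its primes, so `(p, q)` is its only Schmidt pair.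
-/

section Nilpotent

variable {G K : Type*} [Group G] [Group K] {p q : ℕ}

theorem isNilpotent_of_injective [Group.IsNilpotent K] (f : G →* K) (hf : Function.Injective f) :
    Group.IsNilpotent G :=
  Group.nilpotent_of_mulEquiv (MonoidHom.ofInjective hf).symm

theorem isNilpotent_of_forall_prime_dvd_card_eq [Finite G] (hp : p.Prime)
    (h : ∀ r : ℕ, r.Prime → r ∣ Nat.card G → r = p) : Group.IsNilpotent G :=
  have : Fact p.Prime := ⟨hp⟩
  (IsPGroup.of_card (Nat.eq_prime_pow_of_unique_prime_dvd Nat.card_pos.ne'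
    fun hr hrG => h _ hr hrG)).isNilpotent

theorem Sylow.normal_of_not_dvd_card [Finite G] [Fact p.Prime] (hpG : ¬ p ∣ Nat.card G)
    (P : Sylow p G) : (P : Subgroup G).Normal := by
  rcases P.isPGroup'.card_eq_or_dvd with h | h
  · rw [Subgroup.eq_bot_of_card_eq _ h]
    infer_instance
  · exact absurd (h.trans (Subgroup.card_subgroup_dvd_card _)) hpG

theorem isNilpotent_of_sylow_normal [Finite G]
    (hdvd : ∀ r : ℕ, r.Prime → r ∣ Nat.card G → r = p ∨ r = q)
    (hP : ∀ P : Sylow p G, (P : Subgroup G).Normal)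
    (hQ : ∀ Q : Sylow q G, (Q : Subgroup G).Normal) : Group.IsNilpotent G := by
  refine (Group.isNilpotent_of_finite_tfae.out 3 0).mp ?_
  intro r hr R
  by_cases hrG : r ∣ Nat.card G
  · rcases hdvd r hr.out hrG with rfl | rfl
    exacts [hP R, hQ R]
  · exact R.normal_of_not_dvd_card hrG

theorem IsPGroup.commute_of_isNilpotent [Finite G] [Group.IsNilpotent G] [Fact p.Prime]
    [Fact q.Prime] (hpq : p ≠ q) {P Q : Subgroup G} (hP : IsPGroup p P) (hQ : IsPGroup q Q)
    {x y : G} (hx : x ∈ P) (hy : y ∈ Q) : Commute x y := by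
  have hnormal := (Group.isNilpotent_of_finite_tfae (G := G)).out 0 3 |>.mp ‹_›
  obtain ⟨S, hPS⟩ := hP.exists_le_sylow
  obtain ⟨T, hQT⟩ := hQ.exists_le_sylow
  exact Subgroup.commute_of_normal_of_disjoint _ _ (hnormal p ‹_› S) (hnormal q ‹_› T)
    (IsPGroup.disjoint_of_ne p q hpq _ _ S.isPGroup' T.isPGroup') x y (hPS hx) (hQT hy)

end Nilpotent

section NormalSylow

variable {G : Type*} [Group G] [Finite G] {p : ℕ} [Fact p.Prime]

theorem Sylow.normal_of_normal_isPGroup {N : Subgroup G} [N.Normal] (hN : IsPGroup p N)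
    (hindex : ¬ p ∣ N.index) (P : Sylow p G) : (P : Subgroup G).Normal := by
  have hS : ((hN.toSylow hindex : Sylow p G) : Subgroup G).Normal := by
    rwa [IsPGroup.toSylow_coe]
  have := Sylow.unique_of_normal _ hS
  rwa [Subsingleton.elim P (hN.toSylow hindex)]

theorem Subgroup.sylow_normal (H : Subgroup G) (hG : ∀ P : Sylow p G, (P : Subgroup G).Normal)
    (P : Sylow p H) : (P : Subgroup H).Normal := by
  let S : Sylow p G := default
  have : (S : Subgroup G).Normal := hG S
  exact Sylow.normal_of_normal_isPGroup (N := (S : Subgroup G).subgroupOf H)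
    S.isPGroup'.comap_subtype
    (fun h => S.not_dvd_index (h.trans (Subgroup.relIndex_dvd_index_of_normal _ H))) P

end NormalSylow

section Schmidt

variable {G : Type*} [Group G] {p q : ℕ}

theorem exists_isSchmidtGroup_subgroup [Finite G] (hG : ¬ Group.IsNilpotent G) :
    ∃ H : Subgroup G, IsSchmidtGroup H := by
  obtain ⟨H, hH⟩ := exists_minimal_of_wellFoundedLT (fun H : Subgroup G => ¬ Group.IsNilpotent H)
    ⟨⊤, fun h => hG (Group.nilpotent_of_mulEquiv Subgroup.topEquiv)⟩
  refine ⟨H, inferInstance, hH.prop, fun L hL => ?_⟩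
  have hlt : L.map H.subtype < H := by
    refine lt_of_le_of_ne (Subgroup.map_subtype_le L) fun h => hL ?_
    apply Subgroup.map_injective H.subtype_injective
    rw [h, ← MonoidHom.range_eq_map, Subgroup.range_subtype]
  have := not_not.mp (hH.not_prop_of_lt hlt)
  exact Group.nilpotent_of_mulEquiv (L.equivMapOfInjective _ H.subtype_injective).symm

theorem IsSchmidtPQGroup.dvd_card (hp : p.Prime) (hq : q.Prime) (h : IsSchmidtPQGroup p q G) :
    p ∣ Nat.card G ∧ q ∣ Nat.card G := by
  obtain ⟨⟨hfin, hnil, -⟩, hdvd, -⟩ := h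
  constructor <;> by_contra hndvd
  · exact hnil (isNilpotent_of_forall_prime_dvd_card_eq hq fun r hr hrG =>
      (hdvd r hr hrG).resolve_left (by rintro rfl; exact hndvd hrG))
  · exact hnil (isNilpotent_of_forall_prime_dvd_card_eq hp fun r hr hrG =>
      (hdvd r hr hrG).resolve_right (by rintro rfl; exact hndvd hrG))

end Schmidt

section Transfer

variable {G K : Type*} [Group G] [Group K] {p q : ℕ} [Fact p.Prime]

theorem IsSchmidtPQGroup.of_surjective (hG : IsSchmidtPQGroup p q G) (f : G →* K)
    (hf : Function.Surjective f) (hK : ¬ Group.IsNilpotent K) : IsSchmidtPQGroup p q K := by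
  obtain ⟨⟨hfin, -, hsub⟩, hdvd, hsyl⟩ := hG
  have : Finite K := Finite.of_surjective f hf
  refine ⟨⟨inferInstance, hK, fun H hH => ?_⟩,
    fun r hr hrK => hdvd r hr (hrK.trans (Subgroup.card_dvd_of_surjective f hf)), fun P => ?_⟩
  · have hmap := Subgroup.map_comap_eq_self_of_surjective hf H
    have hcomap : H.comap f ≠ ⊤ := fun h => hH (by
      rw [← hmap, h, ← MonoidHom.range_eq_map, MonoidHom.range_eq_top.2 hf])
    have := hsub _ hcomap
    have := Group.nilpotent_of_surjective _ (f.subgroupMap_surjective (H.comap f))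
    exact Group.nilpotent_of_mulEquiv (MulEquiv.subgroupCongr hmap)
  · obtain ⟨P, rfl⟩ := Sylow.mapSurjective_surjective hf p P
    rw [Sylow.coe_mapSurjective]
    exact (hsyl P).map f hf

theorem IsSchmidtPQGroup.hasSchmidtPQSubgroup_of_map {H : Subgroup G}
    (hH : IsSchmidtPQGroup p q H) (f : G →* K) (hf : ¬ Group.IsNilpotent (H.map f)) :
    HasSchmidtPQSubgroup p q K :=
  ⟨_, hH.of_surjective _ (f.subgroupMap_surjective H) hf⟩

theorem HasSchmidtPQSubgroup.of_injective (h : HasSchmidtPQSubgroup p q G) (f : G →* K)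
    (hf : Function.Injective f) : HasSchmidtPQSubgroup p q K := by
  obtain ⟨H, hH⟩ := h
  refine hH.hasSchmidtPQSubgroup_of_map f fun hnil => hH.1.2.1 ?_
  exact Group.nilpotent_of_mulEquiv (H.equivMapOfInjective f hf).symm

omit [Fact p.Prime] in
theorem not_hasSchmidtPQSubgroup_of_isNilpotent [Group.IsNilpotent G] :
    ¬ HasSchmidtPQSubgroup p q G :=
  fun ⟨H, hH⟩ => hH.1.2.1 (Subgroup.isNilpotent H)

theorem hasSchmidtPQSubgroup_prod_iff : HasSchmidtPQSubgroup p q (G × K) ↔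
    HasSchmidtPQSubgroup p q G ∨ HasSchmidtPQSubgroup p q K := by
  refine ⟨fun ⟨H, hH⟩ => ?_, fun h => h.elim
    (·.of_injective (MonoidHom.inl G K) fun _ _ => congrArg Prod.fst)
    (·.of_injective (MonoidHom.inr G K) fun _ _ => congrArg Prod.snd)⟩
  by_contra! h
  have h₁ : Group.IsNilpotent (H.map (MonoidHom.fst G K)) :=
    not_not.mp fun hn => h.1 (hH.hasSchmidtPQSubgroup_of_map _ hn)
  have h₂ : Group.IsNilpotent (H.map (MonoidHom.snd G K)) :=
    not_not.mp fun hn => h.2 (hH.hasSchmidtPQSubgroup_of_map _ hn)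
  refine hH.1.2.1 (isNilpotent_of_injective
    (((MonoidHom.fst G K).subgroupMap H).prod ((MonoidHom.snd G K).subgroupMap H)) ?_)
  intro x y hxy
  exact Subtype.ext
    (Prod.ext (congrArg (fun z => (z.1 : G)) hxy) (congrArg (fun z => (z.2 : K)) hxy))

theorem hasSchmidtPQSubgroup_pi_iff {ι : Type*} [Finite ι] {K : ι → Type*} [∀ i, Group (K i)] :
    HasSchmidtPQSubgroup p q (∀ i, K i) ↔ ∃ i, HasSchmidtPQSubgroup p q (K i) := by
  classical
  refine ⟨fun ⟨H, hH⟩ => ?_, fun ⟨i, h⟩ =>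
    h.of_injective (MonoidHom.mulSingle K i) (Pi.mulSingle_injective i)⟩
  by_contra! h
  have (i : ι) : Group.IsNilpotent (H.map (Pi.evalMonoidHom K i)) :=
    not_not.mp fun hn => h i (hH.hasSchmidtPQSubgroup_of_map _ hn)
  refine hH.1.2.1 (isNilpotent_of_injective
    (MonoidHom.pi fun i => (Pi.evalMonoidHom K i).subgroupMap H) ?_)
  intro x y hxy
  exact Subtype.ext (funext fun i => congrArg (fun z => (z i : K i)) hxy)

end Transfer

section PrimePair

variable {G : Type*} [Group G] [Finite G] {p q : ℕ} [Fact p.Prime]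

theorem hasSchmidtPQSubgroup_of_not_isNilpotent (hG : ¬ Group.IsNilpotent G)
    (hdvd : ∀ r : ℕ, r.Prime → r ∣ Nat.card G → r = p ∨ r = q)
    (hP : ∀ P : Sylow p G, (P : Subgroup G).Normal) : HasSchmidtPQSubgroup p q G := by
  obtain ⟨H, hH⟩ := exists_isSchmidtGroup_subgroup hG
  exact ⟨H, hH, fun r hr hrH => hdvd r hr (hrH.trans (Subgroup.card_subgroup_dvd_card H)),
    H.sylow_normal hP⟩

theorem HasSchmidtPQSubgroup.eq_of_sylow_normal
    (hdvd : ∀ r : ℕ, r.Prime → r ∣ Nat.card G → r = p ∨ r = q)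
    (hP : ∀ P : Sylow p G, (P : Subgroup G).Normal) {p' q' : ℕ} (hp' : p'.Prime)
    (hq' : q'.Prime) (hpq' : p' ≠ q') (h : HasSchmidtPQSubgroup p' q' G) : p' = p ∧ q' = q := by
  obtain ⟨H, hH⟩ := h
  have hdvdH (r : ℕ) (hr : r.Prime) (hrH : r ∣ Nat.card H) : r = p ∨ r = q :=
    hdvd r hr (hrH.trans (Subgroup.card_subgroup_dvd_card H))
  obtain ⟨hp'H, hq'H⟩ := hH.dvd_card hp' hq'
  rcases hdvdH p' hp' hp'H with rfl | rfl
  · exact ⟨rfl, (hdvdH q' hq' hq'H).resolve_left hpq'.symm⟩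
  · -- then `q' = p`, and `H` would have normal Sylow subgroups for both of its primes
    obtain rfl := (hdvdH q' hq' hq'H).resolve_right hpq'.symm
    have : Finite H := hH.1.1
    exact absurd (isNilpotent_of_sylow_normal (fun r hr hrH => (hH.2.1 r hr hrH).symm)
      (H.sylow_normal hP) hH.2.2) hH.1.2.1

end PrimePair

namespace RegularWreathProduct

variable {D Q : Type*} [Group D] [Group Q] {p q : ℕ}

theorem rightHom_surjective : Function.Surjective (rightHom : D ≀ᵣ Q →* Q) :=
  fun y => ⟨inl y, rfl⟩

theorem card_ker_rightHom [Finite Q] :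
    Nat.card (rightHom : D ≀ᵣ Q →* Q).ker = Nat.card D ^ Nat.card Q := by
  have h := (rightHom : D ≀ᵣ Q →* Q).ker.card_mul_index
  rw [Subgroup.index_ker, MonoidHom.range_eq_top.2 rightHom_surjective, Subgroup.card_top,
    card] at h
  exact Nat.eq_of_mul_eq_mul_right Nat.card_pos h

theorem isPGroup_ker_rightHom [Finite D] [Finite Q] [Fact p.Prime] (hD : IsPGroup p D) :
    IsPGroup p (rightHom : D ≀ᵣ Q →* Q).ker := by
  obtain ⟨n, hn⟩ := IsPGroup.iff_card.mp hD
  exact IsPGroup.of_card (by rw [card_ker_rightHom, hn, ← pow_mul])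

theorem exists_not_commute [Nontrivial D] [Nontrivial Q] :
    ∃ x ∈ (rightHom : D ≀ᵣ Q →* Q).ker, ∃ y : Q, ¬ Commute x (inl y) := by
  classical
  obtain ⟨d, hd⟩ := exists_ne (1 : D)
  obtain ⟨y, hy⟩ := exists_ne (1 : Q)
  refine ⟨⟨Pi.mulSingle 1 d, 1⟩, rfl, y, fun h => hd ?_⟩
  simpa [mul_def, hy] using (congrArg (fun w => w.left y) h).symm

theorem not_isNilpotent [Finite D] [Finite Q] [Nontrivial D] [Nontrivial Q] [Fact p.Prime]
    [Fact q.Prime] (hpq : p ≠ q) (hD : IsPGroup p D) (hQ : IsPGroup q Q) :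
    ¬ Group.IsNilpotent (D ≀ᵣ Q) := by
  intro
  obtain ⟨x, hx, y, hxy⟩ := exists_not_commute (D := D) (Q := Q)
  exact hxy ((isPGroup_ker_rightHom hD).commute_of_isNilpotent hpq
    (hQ.of_surjective _ (inl : Q →* D ≀ᵣ Q).rangeRestrict_surjective) hx ⟨y, rfl⟩)

theorem sylow_normal [Finite D] [Finite Q] [Fact p.Prime] (hD : IsPGroup p D)
    (hQ : ¬ p ∣ Nat.card Q) (P : Sylow p (D ≀ᵣ Q)) : (P : Subgroup (D ≀ᵣ Q)).Normal :=
  Sylow.normal_of_normal_isPGroup (isPGroup_ker_rightHom hD) (by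
    rwa [Subgroup.index_ker, MonoidHom.range_eq_top.2 rightHom_surjective, Subgroup.card_top]) P

end RegularWreathProduct

theorem exists_group_hasSchmidtPQSubgroup_iff {p q : ℕ} (hp : p.Prime) (hq : q.Prime)
    (hpq : p ≠ q) :
    ∃ (W : Type) (_ : Group W) (_ : Finite W),
      (∀ r : ℕ, r.Prime → (r ∣ Nat.card W ↔ r = p ∨ r = q)) ∧
      ∀ p' q' : ℕ, p'.Prime → q'.Prime → p' ≠ q' →
        (HasSchmidtPQSubgroup p' q' W ↔ p' = p ∧ q' = q) := by
  have := Fact.mk hp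
  have := Fact.mk hq
  have hD : IsPGroup p (Multiplicative (ZMod p)) := IsPGroup.of_card (n := 1) (by simp)
  have hQ : IsPGroup q (Multiplicative (ZMod q)) := IsPGroup.of_card (n := 1) (by simp)
  have hdvd (r : ℕ) (hr : r.Prime) :
      r ∣ Nat.card (Multiplicative (ZMod p) ≀ᵣ Multiplicative (ZMod q)) ↔ r = p ∨ r = q := by
    simp only [RegularWreathProduct.card, Nat.card_eq_fintype_card, Fintype.card_multiplicative,
      ZMod.card, hr.dvd_mul, ← Nat.prime_dvd_prime_iff_eq hr hp, ← Nat.prime_dvd_prime_iff_eq hr hq]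
    exact or_congr_left ⟨hr.dvd_of_dvd_pow, (·.trans (dvd_pow_self p hq.ne_zero))⟩
  have hP := RegularWreathProduct.sylow_normal hD (Q := Multiplicative (ZMod q))
    (by simpa [Nat.prime_dvd_prime_iff_eq hp hq] using hpq)
  refine ⟨_, inferInstance, inferInstance, hdvd, fun p' q' hp' hq' hpq' =>
    ⟨(·.eq_of_sylow_normal (fun r hr => (hdvd r hr).mp) hP hp' hq' hpq'), ?_⟩⟩
  rintro ⟨rfl, rfl⟩
  exact hasSchmidtPQSubgroup_of_not_isNilpotent (RegularWreathProduct.not_isNilpotent hpq hD hQ)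
    (fun r hr => (hdvd r hr).mp) hP

theorem exists_group_hasSchmidtPQSubgroup_iff_mem (E : Finset (ℕ × ℕ))
    (hE : ∀ e ∈ E, e.1.Prime ∧ e.2.Prime ∧ e.1 ≠ e.2) :
    ∃ (B : Type) (_ : Group B) (_ : Finite B),
      (∀ r : ℕ, r.Prime → (r ∣ Nat.card B ↔ ∃ e ∈ E, r = e.1 ∨ r = e.2)) ∧
      ∀ p q : ℕ, p.Prime → q.Prime → p ≠ q → (HasSchmidtPQSubgroup p q B ↔ (p, q) ∈ E) := by
  choose W _ _ hWdvd hW using fun e : E =>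
    exists_group_hasSchmidtPQSubgroup_iff (hE e e.2).1 (hE e e.2).2.1 (hE e e.2).2.2
  refine ⟨∀ e : E, W e, inferInstance, inferInstance, fun r hr => ?_, fun p q hp hq hpq => ?_⟩
  · rw [Nat.card_pi, Prime.dvd_finsetProd_iff hr.prime]
    simp [hWdvd _ r hr]
  · have := Fact.mk hp
    rw [hasSchmidtPQSubgroup_pi_iff]
    simp [hW _ p q hp hq hpq]

theorem exists_commGroup_prime_dvd_card_iff (V : Finset ℕ) (hV : ∀ r ∈ V, r.Prime) :
    ∃ (C : Type) (_ : CommGroup C) (_ : Finite C),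
      ∀ r : ℕ, r.Prime → (r ∣ Nat.card C ↔ r ∈ V) := by
  have : NeZero (∏ r ∈ V, r) := ⟨Finset.prod_ne_zero_iff.mpr fun r hr => (hV r hr).ne_zero⟩
  refine ⟨Multiplicative (ZMod (∏ r ∈ V, r)), inferInstance, inferInstance, fun r hr => ?_⟩
  rw [Nat.card_eq_fintype_card, Fintype.card_multiplicative, ZMod.card,
    Prime.dvd_finsetProd_iff hr.prime]
  exact ⟨fun ⟨s, hs, hrs⟩ => (Nat.prime_dvd_prime_iff_eq hr (hV s hs)).mp hrs ▸ hs,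
    fun h => ⟨r, h, dvd_rfl⟩⟩

theorem statement_12 (G₁ : Type) [Group G₁] [Finite G₁]
    (E : Finset (ℕ × ℕ)) (hE : ∀ e ∈ E, e.1.Prime ∧ e.2.Prime ∧ e.1 ≠ e.2)
    (hGE : ∀ p q : ℕ, p.Prime → q.Prime → p ≠ q → HasSchmidtPQSubgroup p q G₁ → (p, q) ∈ E)
    (V : Finset ℕ) (hV : ∀ r ∈ V, r.Prime)
    (hGV : ∀ r : ℕ, r.Prime → r ∣ Nat.card G₁ → r ∈ V)
    (hEV : ∀ e ∈ E, e.1 ∈ V ∧ e.2 ∈ V) :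
    ∃ (G₂ : Type) (_ : Group G₂) (_ : Finite G₂),
      (∃ H : Subgroup G₂, Nonempty (G₁ ≃* H)) ∧
      (∀ r : ℕ, r.Prime → (r ∣ Nat.card G₂ ↔ r ∈ V)) ∧
      (∀ p q : ℕ, p.Prime → q.Prime → p ≠ q →
        (HasSchmidtPQSubgroup p q G₂ ↔ (p, q) ∈ E)) := by
  obtain ⟨C, _, _, hC⟩ := exists_commGroup_prime_dvd_card_iff V hV
  obtain ⟨B, _, _, hBdvd, hB⟩ := exists_group_hasSchmidtPQSubgroup_iff_mem E hE
  refine ⟨G₁ × C × B, inferInstance, inferInstance,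
    ⟨_, ⟨MonoidHom.ofInjective (f := MonoidHom.inl G₁ (C × B)) fun _ _ => congrArg Prod.fst⟩⟩,
    fun r hr => ?_, fun p q hp hq hpq => ?_⟩
  · rw [Nat.card_prod, Nat.card_prod, hr.dvd_mul, hr.dvd_mul, hC r hr, hBdvd r hr]
    refine ⟨?_, fun h => Or.inr (Or.inl h)⟩
    rintro (h | h | ⟨e, he, rfl | rfl⟩)
    exacts [hGV r hr h, h, (hEV e he).1, (hEV e he).2]
  · have := Fact.mk hp
    rw [hasSchmidtPQSubgroup_prod_iff, hasSchmidtPQSubgroup_prod_iff, hB p q hp hq hpq]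
    refine ⟨?_, fun h => Or.inr (Or.inr h)⟩
    rintro (h | h | h)
    exacts [hGE p q hp hq hpq h, absurd h not_hasSchmidtPQSubgroup_of_isNilpotent, h]
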